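/- Assume that for each i ∈ I_n, every equilibrium of the system lying on π_i is below γ_i (i.e. every u ∈ ℝ^n_+ with u_i = 0 at which the vector field vanishes satisfies α_i u < 1). Then there exists a unique equilibrium x* with x*_i > 0 for all i ∈ I_n, and it satisfies x*_i ≤ 1/a_{ii} for all i. -/

import Mathlib

open Filter Topology Set

noncomputable section

/-- `alphaLV a i x = Σ_j a i j * x j`. -/
def alphaLV {n : ℕ} (a : Fin n → Fin n → ℝ) (i : Fin n) (x : Fin n → ℝ) : ℝ :=
  ∑ j, a i j * x j

/-- A solution of the Lotka–Volterra system `x_i' = b_i x_i (1 - α_i x)` on `[0,∞)`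
with values in the nonnegative orthant. -/
def IsLVSolution {n : ℕ} (b : Fin n → ℝ) (a : Fin n → Fin n → ℝ)
    (x : ℝ → Fin n → ℝ) : Prop :=
  (∀ t ∈ Set.Ici (0:ℝ), ∀ i, 0 ≤ x t i) ∧
  (∀ t ∈ Set.Ici (0:ℝ), ∀ i,
    HasDerivWithinAt (fun s => x s i)
      (b i * x t i * (1 - alphaLV a i (x t))) (Set.Ici 0) t)

/-- An equilibrium of the Lotka–Volterra system in `ℝ^n_+`. -/
def IsLVEquilibrium {n : ℕ} (b : Fin n → ℝ) (a : Fin n → Fin n → ℝ)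
    (y : Fin n → ℝ) : Prop :=
  (∀ i, 0 ≤ y i) ∧ ∀ i, b i * y i * (1 - alphaLV a i y) = 0

/-- `y` is a global attractor: it is an equilibrium and every solution starting in
the open positive orthant converges to it. -/
def IsGlobalAttractor {n : ℕ} (b : Fin n → ℝ) (a : Fin n → Fin n → ℝ)
    (y : Fin n → ℝ) : Prop :=
  IsLVEquilibrium b a y ∧
  ∀ x : ℝ → Fin n → ℝ, IsLVSolution b a x → (∀ i, 0 < x 0 i) →
    ∀ i, Tendsto (fun t => x t i) atTop (nhds (y i))

open Classical in
/-- The projection `u^J`: `u` on `J`, zero off `J`. -/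
def projLV {n : ℕ} (u : Fin n → ℝ) (J : Set (Fin n)) : Fin n → ℝ :=
  fun i => if i ∈ J then u i else 0

open Classical in
/-- The vector `U` of (3.1), with the index set `I_n` replaced by `S`. -/
def Uvec {n : ℕ} (a : Fin n → Fin n → ℝ) (S : Set (Fin n)) (i : Fin n) : ℝ :=
  if ∃ j ∈ S, j ≠ i ∧ (a i i ≤ a j i ∨ a i j = 0) then (a i i)⁻¹
  else if (∀ j ∈ S, j ≠ i → a j i < a i i) ∧
      (∀ j ∈ S, ∀ k ∈ S, j ≠ i → k ≠ i → a j k ≤ a i k) then 0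
  else sSup {r | ∃ j ∈ S, ∃ k ∈ S, j ≠ i ∧ k ≠ i ∧ a i j < a k j ∧
      r = (a k j - a i j) / (a i i * a k j - a i j * a k i)}

/-- Condition `(C_k)` relative to a vector `U`: either `U^{I_n∖{k}}` is below `γ_k`,
or every point of `γ_k ∩ [0, U^{I_n∖{k}}]` is above `γ_j` for every `j ≠ k`. -/
def CondC {n : ℕ} (a : Fin n → Fin n → ℝ) (U : Fin n → ℝ) (k : Fin n) : Prop :=
  alphaLV a k (projLV U (({k} : Set (Fin n))ᶜ)) < 1 ∨
  ∀ j, j ≠ k → ∀ x : Fin n → ℝ,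
    (∀ i, 0 ≤ x i ∧ x i ≤ projLV U (({k} : Set (Fin n))ᶜ) i) →
    alphaLV a k x = 1 → 1 < alphaLV a j x

/-- Condition (3.7) for the pair `(i,j)` relative to a vector `U`. -/
def Cond37 {n : ℕ} (a : Fin n → Fin n → ℝ) (U : Fin n → ℝ) (i j : Fin n) : Prop :=
  max 0 (a i j / a j j * (1 - alphaLV a j (projLV U (({i, j} : Set (Fin n))ᶜ))))
    < 1 - alphaLV a i (projLV U (({i, j} : Set (Fin n))ᶜ))

/-- The vector `Y = (1/a₁₁, …, 1/aₙₙ)`. -/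
def Yvec {n : ℕ} (a : Fin n → Fin n → ℝ) : Fin n → ℝ := fun i => (a i i)⁻¹

/-!
Existence. By strong induction on `S ⊆ I_n` we find `x ≥ 0`, vanishing off `S`, with
`α_i x = 1` for `i ∈ S`. Minimise `Σ_{i ∈ S} (α_i x - 1)²` over a box so large that only the
constraints `x ≥ 0` can be active. With `r_i = α_i x - 1` and `D_j = Σ_{i ∈ S} r_i a_{ij}`, the
minimiser has `D_j ≥ 0` on `S` and `x_j D_j = 0`, hence `Σ r_i² = Σ r_i α_i x - Σ r_i = -Σ r_i`.
If all `r_i` were negative, `D_j ≤ r_j a_{jj} < 0`. Otherwise `P = {r_i < 0}` is a proper subset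
of `S`, and the point `w` obtained for `P` is an equilibrium, so the hypothesis gives `α_i w < 1`
wherever `r_i > 0`; thus `0 ≤ Σ_j w_j D_j = Σ r_i α_i w ≤ Σ r_i = -Σ r_i² ≤ 0`, and `r = 0`.

Uniqueness. If `u > 0` and `v` both lie on every `γ_i` but `u ≰ v`, the point where the ray
from `u` through `v` leaves `ℝ^n_+` is an equilibrium on some `π_k` that lies on `γ_k`.
-/

open Finset

variable {n : ℕ}

lemma alphaLV_eq_dotProduct (a : Fin n → Fin n → ℝ) (i : Fin n) (x : Fin n → ℝ) :
    alphaLV a i x = a i ⬝ᵥ x := rfl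

lemma continuous_alphaLV (a : Fin n → Fin n → ℝ) (i : Fin n) :
    Continuous (alphaLV a i) := by
  unfold alphaLV
  fun_prop

lemma alphaLV_add_single (a : Fin n → Fin n → ℝ) (i j : Fin n) (x : Fin n → ℝ) (s : ℝ) :
    alphaLV a i (x + Pi.single j s) = alphaLV a i x + a i j * s := by
  simp only [alphaLV_eq_dotProduct, dotProduct_add, dotProduct_single]

lemma mul_le_alphaLV {a : Fin n → Fin n → ℝ} (hnn : ∀ i j, 0 ≤ a i j) {x : Fin n → ℝ}
    (hx : ∀ i, 0 ≤ x i) (i : Fin n) :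
    a i i * x i ≤ alphaLV a i x :=
  single_le_sum (f := fun j => a i j * x j) (fun j _ => mul_nonneg (hnn i j) (hx j)) (mem_univ i)

lemma sum_mul_alphaLV (a : Fin n → Fin n → ℝ) (S : Finset (Fin n)) (r v : Fin n → ℝ) :
    ∑ i ∈ S, r i * alphaLV a i v = ∑ j, v j * ∑ i ∈ S, r i * a i j := by
  simp only [alphaLV, mul_sum]
  rw [sum_comm]
  exact sum_congr rfl fun j _ => sum_congr rfl fun i _ => by ring

lemma isLVEquilibrium_of_alphaLV_eq_one {a : Fin n → Fin n → ℝ} (b : Fin n → ℝ) {x : Fin n → ℝ}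
    (hx : ∀ i, 0 ≤ x i) (hα : ∀ i, x i = 0 ∨ alphaLV a i x = 1) : IsLVEquilibrium b a x :=
  ⟨hx, fun i => by rcases hα i with h | h <;> simp [h]⟩

lemma IsLVEquilibrium.alphaLV_eq_one {a : Fin n → Fin n → ℝ} {b y : Fin n → ℝ}
    (hy : IsLVEquilibrium b a y) {i : Fin n} (hb : b i ≠ 0) (hyi : y i ≠ 0) :
    alphaLV a i y = 1 := by
  have := hy.2 i
  simp only [mul_eq_zero, hb, hyi, false_or] at this
  linarith

lemma nonneg_of_forall_mul_add_mul_nonneg {d e ε : ℝ} (hε : 0 < ε)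
    (h : ∀ s ∈ Set.Ioo 0 ε, 0 ≤ s * (d + s * e)) : 0 ≤ d := by
  have hlim : Tendsto (fun s : ℝ => d + s * e) (𝓝[>] 0) (𝓝 d) :=
    (Continuous.tendsto' (by fun_prop) 0 d (by simp)).mono_left nhdsWithin_le_nhds
  refine ge_of_tendsto hlim ?_
  filter_upwards [Ioo_mem_nhdsGT hε] with s hs
  exact (mul_nonneg_iff_of_pos_left hs.1).mp (h s hs)

def alphaDefect (a : Fin n → Fin n → ℝ) (S : Finset (Fin n)) (x : Fin n → ℝ) : ℝ :=
  ∑ i ∈ S, (alphaLV a i x - 1) ^ 2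

/-- Half the gradient of `alphaDefect a S`. -/
def alphaDefectGrad (a : Fin n → Fin n → ℝ) (S : Finset (Fin n)) (x : Fin n → ℝ)
    (j : Fin n) : ℝ :=
  ∑ i ∈ S, (alphaLV a i x - 1) * a i j

lemma continuous_alphaDefect (a : Fin n → Fin n → ℝ) (S : Finset (Fin n)) :
    Continuous (alphaDefect a S) :=
  continuous_finsetSum _ fun i _ => ((continuous_alphaLV a i).sub continuous_const).pow 2

lemma alphaDefect_add_single (a : Fin n → Fin n → ℝ) (S : Finset (Fin n)) (x : Fin n → ℝ)
    (j : Fin n) (s : ℝ) :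
    alphaDefect a S (x + Pi.single j s) =
      alphaDefect a S x + s * (2 * alphaDefectGrad a S x j + s * ∑ i ∈ S, a i j ^ 2) := by
  simp only [alphaDefect, alphaDefectGrad, alphaLV_add_single, mul_sum, ← sum_add_distrib]
  exact sum_congr rfl fun i _ => by ring

lemma IsMinOn.mul_alphaDefectGrad_nonneg {a : Fin n → Fin n → ℝ} {S : Finset (Fin n)}
    {c x : Fin n → ℝ}
    (hmin : IsMinOn (alphaDefect a S) (Set.univ.pi fun i => Set.Icc 0 (c i)) x)
    (hxK : x ∈ Set.univ.pi fun i => Set.Icc 0 (c i)) {j : Fin n} {s : ℝ}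
    (hs : x j + s ∈ Set.Icc 0 (c j)) :
    0 ≤ s * (2 * alphaDefectGrad a S x j + s * ∑ i ∈ S, a i j ^ 2) := by
  have hmem : x + Pi.single j s ∈ Set.univ.pi fun i => Set.Icc 0 (c i) := by
    intro k _
    by_cases hk : k = j
    · subst hk; simpa using hs
    · simpa [hk] using hxK k (Set.mem_univ k)
  have : alphaDefect a S x ≤ alphaDefect a S (x + Pi.single j s) := hmin hmem
  rw [alphaDefect_add_single] at this
  linarith

lemma IsMinOn.alphaDefectGrad_nonneg {a : Fin n → Fin n → ℝ} {S : Finset (Fin n)} {c x : Fin n → ℝ}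
    (hmin : IsMinOn (alphaDefect a S) (Set.univ.pi fun i => Set.Icc 0 (c i)) x)
    (hxK : x ∈ Set.univ.pi fun i => Set.Icc 0 (c i)) {j : Fin n} (hj : x j < c j) :
    0 ≤ alphaDefectGrad a S x j := by
  have hx0 := (hxK j (Set.mem_univ j)).1
  have := nonneg_of_forall_mul_add_mul_nonneg (sub_pos.2 hj) fun s hs =>
    hmin.mul_alphaDefectGrad_nonneg hxK ⟨by linarith [hs.1], by linarith [hs.2]⟩
  linarith

lemma IsMinOn.alphaDefectGrad_nonpos {a : Fin n → Fin n → ℝ} {S : Finset (Fin n)} {c x : Fin n → ℝ}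
    (hmin : IsMinOn (alphaDefect a S) (Set.univ.pi fun i => Set.Icc 0 (c i)) x)
    (hxK : x ∈ Set.univ.pi fun i => Set.Icc 0 (c i)) {j : Fin n} (hj : 0 < x j) :
    alphaDefectGrad a S x j ≤ 0 := by
  have hxc := (hxK j (Set.mem_univ j)).2
  have := nonneg_of_forall_mul_add_mul_nonneg (d := -(2 * alphaDefectGrad a S x j))
    (e := ∑ i ∈ S, a i j ^ 2) hj fun s hs => by
      have := hmin.mul_alphaDefectGrad_nonneg hxK (s := -s)
        ⟨by linarith [hs.2], by linarith [hs.1]⟩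
      linarith
  linarith

lemma exists_alphaDefectGrad_kkt {a : Fin n → Fin n → ℝ} (hdiag : ∀ i, 0 < a i i)
    (hnn : ∀ i j, 0 ≤ a i j) (S : Finset (Fin n)) :
    ∃ x : Fin n → ℝ, (∀ i, 0 ≤ x i) ∧ (∀ i ∉ S, x i = 0) ∧
      (∀ j ∈ S, 0 ≤ alphaDefectGrad a S x j) ∧ ∀ j, x j * alphaDefectGrad a S x j = 0 := by
  classical
  -- on a face `x j = c j` of the box the defect exceeds its value `#S` at `0`
  set c : Fin n → ℝ := fun i => if i ∈ S then (#S + 2) / a i i else 0 with hc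
  have h0K : (0 : Fin n → ℝ) ∈ Set.univ.pi fun i => Set.Icc 0 (c i) := fun i _ => by
    by_cases hi : i ∈ S <;> simp [hc, hi, (hdiag i).le, div_nonneg, add_nonneg]
  obtain ⟨x, hxK, hmin⟩ := (isCompact_univ_pi fun i => isCompact_Icc).exists_isMinOn
    ⟨0, h0K⟩ (continuous_alphaDefect a S).continuousOn
  have hx0 : ∀ i, 0 ≤ x i := fun i => (hxK i (Set.mem_univ i)).1
  have hxc : ∀ i, x i ≤ c i := fun i => (hxK i (Set.mem_univ i)).2
  have hxS : ∀ i ∉ S, x i = 0 := fun i hi =>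
    le_antisymm (by simpa [hc, hi] using hxc i) (hx0 i)
  have hxlt : ∀ j ∈ S, x j < c j := by
    intro j hj
    refine (hxc j).lt_of_ne fun hxj => ?_
    have hdefect : alphaDefect a S x ≤ #S := by simpa [alphaDefect, alphaLV] using hmin h0K
    have hcj : a j j * c j = #S + 2 := by simp [hc, hj, mul_div_cancel₀ _ (hdiag j).ne']
    have hr : (#S : ℝ) + 1 ≤ alphaLV a j x - 1 := by
      have := mul_le_alphaLV hnn hx0 j
      rw [hxj, hcj] at this
      linarith
    have hsq : (alphaLV a j x - 1) ^ 2 ≤ alphaDefect a S x :=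
      single_le_sum (f := fun i => (alphaLV a i x - 1) ^ 2) (fun i _ => sq_nonneg _) hj
    nlinarith [mul_self_le_mul_self (by positivity) hr]
  refine ⟨x, hx0, hxS, fun j hj => hmin.alphaDefectGrad_nonneg hxK (hxlt j hj), fun j => ?_⟩
  by_cases hj : j ∈ S
  · rcases (hx0 j).eq_or_lt with hxj | hxj
    · rw [← hxj, zero_mul]
    · rw [le_antisymm (hmin.alphaDefectGrad_nonpos hxK hxj)
        (hmin.alphaDefectGrad_nonneg hxK (hxlt j hj)), mul_zero]
  · rw [hxS j hj, zero_mul]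

lemma alphaLV_eq_one_of_kkt {a : Fin n → Fin n → ℝ} {b : Fin n → ℝ} (hdiag : ∀ i, 0 < a i i)
    (hnn : ∀ i j, 0 ≤ a i j)
    (h : ∀ i : Fin n, ∀ u : Fin n → ℝ,
      IsLVEquilibrium b a u → u i = 0 → alphaLV a i u < 1)
    {S : Finset (Fin n)}
    (ih : ∀ P ⊂ S, ∃ w : Fin n → ℝ,
      (∀ i, 0 ≤ w i) ∧ (∀ i ∉ P, w i = 0) ∧ ∀ i ∈ P, alphaLV a i w = 1)
    {x : Fin n → ℝ} (hgrad : ∀ j ∈ S, 0 ≤ alphaDefectGrad a S x j)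
    (hcompl : ∀ j, x j * alphaDefectGrad a S x j = 0) :
    ∀ i ∈ S, alphaLV a i x = 1 := by
  classical
  set r : Fin n → ℝ := fun i => alphaLV a i x - 1
  have hsum (v : Fin n → ℝ) :
      ∑ i ∈ S, r i * alphaLV a i v = ∑ j, v j * alphaDefectGrad a S x j :=
    sum_mul_alphaLV a S r v
  have hsq : ∑ i ∈ S, r i ^ 2 = -∑ i ∈ S, r i := by
    have : ∑ i ∈ S, r i * alphaLV a i x = 0 := by
      rw [hsum]; exact sum_eq_zero fun j _ => hcompl j
    rw [eq_neg_iff_add_eq_zero, ← sum_add_distrib, ← this]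
    exact sum_congr rfl fun i _ => by simp only [r]; ring
  suffices ∑ i ∈ S, r i ^ 2 = 0 by
    intro i hi
    have := (sum_eq_zero_iff_of_nonneg fun i _ => sq_nonneg (r i)).1 this i hi
    linarith [pow_eq_zero_iff (n := 2) two_ne_zero |>.1 this]
  set P := S.filter fun i => r i < 0
  rcases (filter_subset (fun i => r i < 0) S).eq_or_ssubset with hPS | hPS
  · rcases S.eq_empty_or_nonempty with rfl | ⟨j, hj⟩
    · simp
    have hneg : ∀ i ∈ S, r i < 0 := filter_eq_self.1 hPS
    have : alphaDefectGrad a S x j < 0 :=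
      sum_neg' (fun i hi => mul_nonpos_of_nonpos_of_nonneg (hneg i hi).le (hnn i j))
        ⟨j, hj, mul_neg_of_neg_of_pos (hneg j hj) (hdiag j)⟩
    exact absurd (hgrad j hj) this.not_ge
  obtain ⟨w, hw0, hwP, hwα⟩ := ih P hPS
  have hw : IsLVEquilibrium b a w := isLVEquilibrium_of_alphaLV_eq_one b hw0 fun i => by
    by_cases hi : i ∈ P
    · exact .inr (hwα i hi)
    · exact .inl (hwP i hi)
  have hle : ∑ i ∈ S, r i * alphaLV a i w ≤ ∑ i ∈ S, r i := by
    refine sum_le_sum fun i hi => ?_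
    by_cases hiP : i ∈ P
    · rw [hwα i hiP, mul_one]
    · have hri : 0 ≤ r i := by simpa [P, hi] using hiP
      nlinarith [h i w hw (hwP i hiP)]
  have hge : 0 ≤ ∑ i ∈ S, r i * alphaLV a i w := by
    rw [hsum]
    refine sum_nonneg fun j _ => ?_
    by_cases hjP : j ∈ P
    · exact mul_nonneg (hw0 j) (hgrad j (filter_subset _ S hjP))
    · rw [hwP j hjP, zero_mul]
  linarith [sum_nonneg fun i (_ : i ∈ S) => sq_nonneg (r i)]

lemma exists_alphaLV_eq_one_on {a : Fin n → Fin n → ℝ} {b : Fin n → ℝ} (hdiag : ∀ i, 0 < a i i)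
    (hnn : ∀ i j, 0 ≤ a i j)
    (h : ∀ i : Fin n, ∀ u : Fin n → ℝ,
      IsLVEquilibrium b a u → u i = 0 → alphaLV a i u < 1)
    (S : Finset (Fin n)) :
    ∃ x : Fin n → ℝ, (∀ i, 0 ≤ x i) ∧ (∀ i ∉ S, x i = 0) ∧ ∀ i ∈ S, alphaLV a i x = 1 := by
  induction S using Finset.strongInduction with
  | H S ih =>
    obtain ⟨x, hx0, hxS, hgrad, hcompl⟩ := exists_alphaDefectGrad_kkt hdiag hnn S
    exact ⟨x, hx0, hxS, alphaLV_eq_one_of_kkt hdiag hnn h ih hgrad hcompl⟩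

lemma le_of_alphaLV_eq_one {a : Fin n → Fin n → ℝ} {b : Fin n → ℝ}
    (h : ∀ i : Fin n, ∀ u : Fin n → ℝ,
      IsLVEquilibrium b a u → u i = 0 → alphaLV a i u < 1)
    {u v : Fin n → ℝ} (hu : ∀ i, 0 < u i) (hαu : ∀ i, alphaLV a i u = 1)
    (hαv : ∀ i, alphaLV a i v = 1) : u ≤ v := by
  classical
  by_contra huv
  obtain ⟨k, hk⟩ : ∃ k, v k < u k := by simpa [Pi.le_def] using huv
  set T := univ.filter fun k => v k < u k
  obtain ⟨k₀, hk₀T, hmin⟩ :=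
    T.exists_min_image (fun k => u k / (u k - v k)) ⟨k, by simpa [T] using hk⟩
  have hk₀ : v k₀ < u k₀ := by simpa [T] using hk₀T
  set t := u k₀ / (u k₀ - v k₀)
  have ht : 0 < t := div_pos (hu k₀) (sub_pos.2 hk₀)
  set z := u + t • (v - u)
  have hαz : ∀ i, alphaLV a i z = 1 := fun i => by
    have hu' : a i ⬝ᵥ u = 1 := hαu i
    have hv' : a i ⬝ᵥ v = 1 := hαv i
    simp [z, alphaLV_eq_dotProduct, dotProduct_sub, hu', hv']
  have hz0 : ∀ k, 0 ≤ z k := fun k => by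
    simp only [z, Pi.add_apply, Pi.smul_apply, Pi.sub_apply, smul_eq_mul]
    by_cases hk : v k < u k
    · have := (le_div_iff₀ (sub_pos.2 hk)).1 (hmin k (by simpa [T] using hk))
      linarith
    · nlinarith [hu k]
  have hzk₀ : z k₀ = 0 := by
    simp only [z, Pi.add_apply, Pi.smul_apply, Pi.sub_apply, smul_eq_mul, t]
    field_simp [(sub_pos.2 hk₀).ne']
    ring
  have hz : IsLVEquilibrium b a z :=
    isLVEquilibrium_of_alphaLV_eq_one b hz0 fun i => .inr (hαz i)
  exact (h k₀ z hz hzk₀).ne (hαz k₀)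

theorem lemma5_1_general (n : ℕ) (b : Fin n → ℝ) (a : Fin n → Fin n → ℝ)
    (hb : ∀ i, 0 < b i) (hdiag : ∀ i, 0 < a i i) (hnn : ∀ i j, 0 ≤ a i j)
    (h : ∀ i : Fin n, ∀ u : Fin n → ℝ,
      IsLVEquilibrium b a u → u i = 0 → alphaLV a i u < 1) :
    ∃ xs : Fin n → ℝ,
      (IsLVEquilibrium b a xs ∧ (∀ i, 0 < xs i) ∧ (∀ i, xs i ≤ (a i i)⁻¹)) ∧
      ∀ y : Fin n → ℝ, IsLVEquilibrium b a y → (∀ i, 0 < y i) → y = xs := by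
  obtain ⟨x, hx0, -, hxα⟩ := exists_alphaLV_eq_one_on hdiag hnn h univ
  replace hxα : ∀ i, alphaLV a i x = 1 := fun i => hxα i (mem_univ i)
  have hx : IsLVEquilibrium b a x :=
    isLVEquilibrium_of_alphaLV_eq_one b hx0 fun i => .inr (hxα i)
  have hxpos : ∀ i, 0 < x i := fun i =>
    (hx0 i).lt_of_ne fun hxi => (h i x hx hxi.symm).ne (hxα i)
  refine ⟨x, ⟨hx, hxpos, fun i => ?_⟩, fun y hy hypos => ?_⟩
  · rw [← one_div, le_div_iff₀ (hdiag i), ← hxα i, mul_comm]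
    exact mul_le_alphaLV hnn hx0 i
  · have hyα : ∀ i, alphaLV a i y = 1 := fun i => hy.alphaLV_eq_one (hb i).ne' (hypos i).ne'
    exact le_antisymm (le_of_alphaLV_eq_one h hypos hyα hxα)
      (le_of_alphaLV_eq_one h hxpos hxα hyα)

/-- Lemma 5.1: if for each `i` every equilibrium on `π_i` is below `γ_i`, then there
is a unique equilibrium `x*` with all components positive, and `x*_i ≤ 1/a_{ii}`. -/
theorem lemma5_1 (n : ℕ) (hn : 2 ≤ n) (b : Fin n → ℝ) (a : Fin n → Fin n → ℝ)
    (hb : ∀ i, 0 < b i) (hdiag : ∀ i, 0 < a i i) (hnn : ∀ i j, 0 ≤ a i j)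
    (h : ∀ i : Fin n, ∀ u : Fin n → ℝ,
      IsLVEquilibrium b a u → u i = 0 → alphaLV a i u < 1) :
    ∃ xs : Fin n → ℝ,
      (IsLVEquilibrium b a xs ∧ (∀ i, 0 < xs i) ∧ (∀ i, xs i ≤ (a i i)⁻¹)) ∧
      ∀ y : Fin n → ℝ, IsLVEquilibrium b a y → (∀ i, 0 < y i) → y = xs :=
  lemma5_1_general n b a hb hdiag hnn h
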